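/- For every real t > 0, the function A(t) = ∫_{Δ₁} dx dp/(2 x^{1/2}(1−x)^{1/2}(x+2t)^{1/2} p^{3/4}(1−p)^{1/2}) is differentiable at t, and its derivative is obtained by differentiating under the integral sign: A′(t) = ∫_{Δ₁} (−1)/(2 x^{1/2}(1−x)^{1/2}(x+2t)^{3/2} p^{3/4}(1−p)^{1/2}) dx dp. -/

import Mathlib

/-!
On `Δ₁ ⊆ (0,1)²` the integrand is `w(x,p) / (x + 2s)^{1/2}`, where `w` is (half) a product of
two Beta densities and hence integrable on the square. For `s` within `t/2` of `t > 0` we have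
`x + 2s ≥ t`, so the integrand and its `s`-derivative `-w / (x + 2s)^{3/2}` are both dominated
by a constant multiple of `w`, and dominated convergence lets us differentiate under the integral.
-/

open MeasureTheory Set

/-- The region `Δ₁ = {(x,p) : 0 < x < 1, 0 < p ≤ (x/(2−x))²}`. -/
def Delta1 : Set (ℝ × ℝ) :=
  {z | 0 < z.1 ∧ z.1 < 1 ∧ 0 < z.2 ∧ z.2 ≤ (z.1 / (2 - z.1)) ^ 2}

theorem integrableOn_rpow_mul_one_sub_rpow {a b : ℝ} (ha : -1 < a) (hb : -1 < b) :
    IntegrableOn (fun x : ℝ => x ^ a * (1 - x) ^ b) (Ioo 0 1) := by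
  have hleft : IntegrableOn (fun x : ℝ => x ^ a * (1 - x) ^ b) (Icc 0 (1 / 2)) := by
    refine IntegrableOn.mul_continuousOn ?_ ?_ isCompact_Icc
    · rw [integrableOn_Icc_iff_integrableOn_Ioc]
      exact (intervalIntegral.intervalIntegrable_rpow' ha).1
    · exact ContinuousOn.rpow_const (by fun_prop) fun x hx => Or.inl (by linarith [hx.2])
  have hright : IntegrableOn (fun x : ℝ => x ^ a * (1 - x) ^ b) (Icc (1 / 2) 1) := by
    refine IntegrableOn.continuousOn_mul ?_ ?_ isCompact_Icc
    · exact ContinuousOn.rpow_const (by fun_prop) fun x hx => Or.inl (by linarith [hx.1])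
    · rw [integrableOn_Icc_iff_integrableOn_Ioc]
      have := (intervalIntegral.intervalIntegrable_rpow' (a := 1 / 2) (b := 0) hb).comp_sub_left 1
      norm_num at this
      exact this.1
  refine (hleft.union hright).mono_set ?_
  rw [Icc_union_Icc_eq_Icc (by norm_num) (by norm_num)]
  exact Ioo_subset_Icc_self

theorem hasDerivAt_div_rpow_affine (a : ℝ) {b c q s : ℝ} (hs : 0 < b + c * s) :
    HasDerivAt (fun s => a / (b + c * s) ^ q) (-(c * q) * a / (b + c * s) ^ (q + 1)) s := by
  have hu := (((hasDerivAt_id s).const_mul c).const_add b).rpow_const (p := q) (Or.inl hs.ne')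
  have hu0 : (b + c * s) ^ q ≠ 0 := (Real.rpow_pos_of_pos hs q).ne'
  refine ((hasDerivAt_const s a).div hu hu0).congr_deriv ?_
  simp only [id, Real.rpow_add_one hs.ne', Real.rpow_sub_one hs.ne']
  field_simp
  ring

theorem norm_div_rpow_le_of_le (a : ℝ) {u v p : ℝ} (hv : 0 < v) (hvu : v ≤ u) (hp : 0 ≤ p) :
    ‖a / u ^ p‖ ≤ ‖a‖ / v ^ p := by
  rw [norm_div, Real.norm_of_nonneg (Real.rpow_nonneg (hv.le.trans hvu) p)]
  exact div_le_div_of_nonneg_left (norm_nonneg a) (Real.rpow_pos_of_pos hv p)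
    (Real.rpow_le_rpow hv.le hvu hp)

theorem hasDerivAt_integral_div_rpow_affine {α : Type*} [MeasurableSpace α] {μ : Measure α}
    {w h : α → ℝ} (hw : Integrable w μ) (hh : AEMeasurable h μ) (h0 : ∀ᵐ z ∂μ, 0 ≤ h z)
    {c q t : ℝ} (hc : 0 < c) (hq : 0 ≤ q) (ht : 0 < t) :
    HasDerivAt (fun s => ∫ z, w z / (h z + c * s) ^ q ∂μ)
      (∫ z, -(c * q) * w z / (h z + c * t) ^ (q + 1) ∂μ) t := by
  have hmeas : ∀ (p s : ℝ) (k : α → ℝ), AEStronglyMeasurable k μ →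
      AEStronglyMeasurable (fun z => k z / (h z + c * s) ^ p) μ := fun p s k hk =>
    (hk.aemeasurable.div ((hh.add_const _).pow_const p)).aestronglyMeasurable
  have hct : 0 < c * (t / 2) := by positivity
  have hball : ∀ s ∈ Metric.ball t (t / 2), ∀ z, 0 ≤ h z → c * (t / 2) ≤ h z + c * s :=
    fun s hs z hz => by
      have : t / 2 < s := by rw [Real.ball_eq_Ioo] at hs; linarith [hs.1]
      nlinarith
  refine (hasDerivAt_integral_of_dominated_loc_of_deriv_le (Metric.ball_mem_nhds t (half_pos ht))
    (F' := fun s z => -(c * q) * w z / (h z + c * s) ^ (q + 1))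
    (.of_forall fun s => hmeas q s w hw.1) ?_ (hmeas (q + 1) t _ (hw.1.const_mul _))
    (bound := fun z => ‖-(c * q) * w z‖ / (c * (t / 2)) ^ (q + 1)) ?_
    ((hw.const_mul _).norm.div_const _) ?_).2
  · refine Integrable.mono' (hw.norm.div_const ((c * t) ^ q)) (hmeas q t w hw.1) ?_
    filter_upwards [h0] with z hz
    exact norm_div_rpow_le_of_le _ (by positivity) (by linarith) hq
  · filter_upwards [h0] with z hz s hs
    exact norm_div_rpow_le_of_le _ hct (hball s hs z hz) (by linarith)
  · filter_upwards [h0] with z hz s hs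
    exact hasDerivAt_div_rpow_affine (w z) (hct.trans_le (hball s hs z hz))

theorem Delta1_subset_Ioo_prod_Ioo : Delta1 ⊆ Ioo 0 1 ×ˢ Ioo 0 1 := by
  rintro ⟨x, p⟩ ⟨hx0, hx1, hp0, hpx⟩
  refine ⟨⟨hx0, hx1⟩, hp0, hpx.trans_lt ?_⟩
  rw [div_pow, div_lt_one (by nlinarith)]
  nlinarith

theorem integrableOn_Delta1_weight :
    IntegrableOn (fun z : ℝ × ℝ => 1 / (2 * z.1 ^ ((1:ℝ)/2) * (1 - z.1) ^ ((1:ℝ)/2) *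
      z.2 ^ ((3:ℝ)/4) * (1 - z.2) ^ ((1:ℝ)/2))) Delta1 := by
  have hsq : IntegrableOn (fun z : ℝ × ℝ => (z.1 ^ (-((1:ℝ)/2)) * (1 - z.1) ^ (-((1:ℝ)/2))) *
      (z.2 ^ (-((3:ℝ)/4)) * (1 - z.2) ^ (-((1:ℝ)/2)))) (Ioo 0 1 ×ˢ Ioo 0 1) := by
    have := (integrableOn_rpow_mul_one_sub_rpow (a := -(1/2)) (b := -(1/2))
      (by norm_num) (by norm_num)).mul_prod
      (integrableOn_rpow_mul_one_sub_rpow (a := -(3/4)) (b := -(1/2)) (by norm_num) (by norm_num))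
    rwa [Measure.prod_restrict] at this
  refine (IntegrableOn.congr_fun (hsq.const_mul 2⁻¹) (fun z hz => ?_)
    (measurableSet_Ioo.prod measurableSet_Ioo)).mono_set Delta1_subset_Ioo_prod_Ioo
  obtain ⟨⟨hx0, hx1⟩, hp0, hp1⟩ := hz
  rw [Real.rpow_neg hx0.le, Real.rpow_neg (sub_nonneg.2 hx1.le), Real.rpow_neg hp0.le,
    Real.rpow_neg (sub_nonneg.2 hp1.le)]
  ring

/-- For `t > 0`, the function `A(t) = ∫_{Δ₁} dx dp/(2x^{1/2}(1−x)^{1/2}(x+2t)^{1/2}p^{3/4}(1−p)^{1/2})`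
is differentiable at `t` and its derivative is obtained by differentiating under the
integral sign. -/
theorem stmt11 (t : ℝ) (ht : 0 < t) :
    HasDerivAt (fun s : ℝ => ∫ z in Delta1,
        1 / (2 * z.1 ^ ((1:ℝ)/2) * (1 - z.1) ^ ((1:ℝ)/2) * (z.1 + 2 * s) ^ ((1:ℝ)/2) *
          z.2 ^ ((3:ℝ)/4) * (1 - z.2) ^ ((1:ℝ)/2)))
      (∫ z in Delta1,
        -1 / (2 * z.1 ^ ((1:ℝ)/2) * (1 - z.1) ^ ((1:ℝ)/2) * (z.1 + 2 * t) ^ ((3:ℝ)/2) *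
          z.2 ^ ((3:ℝ)/4) * (1 - z.2) ^ ((1:ℝ)/2))) t := by
  have hx0 : ∀ᵐ z ∂(volume.restrict Delta1), 0 ≤ z.1 :=
    ae_restrict_of_ae_restrict_of_subset Delta1_subset_Ioo_prod_Ioo
      (ae_restrict_of_forall_mem (measurableSet_Ioo.prod measurableSet_Ioo) fun z hz => hz.1.1.le)
  have hderiv := hasDerivAt_integral_div_rpow_affine integrableOn_Delta1_weight
    measurable_fst.aemeasurable hx0 two_pos (by norm_num : (0:ℝ) ≤ 1 / 2) ht
  -- `ring` needs no positivity here: `(a * b)⁻¹ = a⁻¹ * b⁻¹` holds in any field.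
  convert hderiv using 1
  · funext s
    congr 1 with z
    ring
  · congr 1 with z
    rw [show (1:ℝ) / 2 + 1 = 3 / 2 by norm_num]
    ring
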